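/- Let (Σ,P) be a Kelvin–Planck theory and let (Σ_{C1},P_{C1}) and (Σ_{C2},P_{C2}) be thermometric conjunctions of (Σ,P) with two different thermometers (Σ_{Θ1},P_{Θ1}) and (Σ_{Θ2},P_{Θ2}), where Σ, Σ_{Θ1}, Σ_{Θ2} are pairwise disjoint. Suppose the two thermometric conjunctions are Kelvin–Planck compatible, i.e., there exists a Kelvin–Planck theory (Σ_{C3},P_{C3}) with Σ_{C3} = Σ ∪ Σ_{Θ1} ∪ Σ_{Θ2} whose process set essentially contains both P_{C1} and P_{C2}. Then: (i) for states σ', σ ∈ Σ, σ' ≻_{C1} σ if and only if σ' ≻_{C2} σ (where ≻_{Cj} is the hotter-than relation of (Σ_{Cj},P_{Cj})); (ii) if for each j = 1,2 all Clausius–Duhem temperature scales for (Σ_{Cj},P_{Cj}) are positive multiples of a fixed T*_{Cj}, then the restrictions of T*_{C1} and T*_{C2} to Σ differ by a positive multiple. -/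

import Mathlib

open Set

noncomputable section

/-- Signed regular Borel measures on `X`, modeled via the Riesz representation
theorem as the weak-star dual of `C(X, ℝ)`. -/
abbrev Meas (X : Type*) [TopologicalSpace X] := WeakDual ℝ C(X, ℝ)

/-- The ambient space containing `V(X) = M°(X) ⊕ M(X)`; membership in the
subspace `M°(X)` of the first component is expressed by `p.1 1 = 0`. -/
abbrev VSp (X : Type*) [TopologicalSpace X] := Meas X × Meas X

/-- The cone of nonnegative measures. -/
def PosMeas (X : Type*) [TopologicalSpace X] : Set (Meas X) :=
  {μ | ∀ f : C(X, ℝ), (∀ x, 0 ≤ f x) → 0 ≤ μ f}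

variable {X : Type*} [TopologicalSpace X]

/-- The Dirac measure at a point, i.e. the evaluation functional. -/
def dirac (x : X) : Meas X :=
  (⟨⟨⟨fun f => f x, fun _ _ => rfl⟩, fun _ _ => rfl⟩,
    continuous_eval_const x⟩ : C(X, ℝ) →L[ℝ] ℝ)

/-- The set of nonnegative multiples of members of `P`. -/
def coneOf (P : Set (VSp X)) : Set (VSp X) :=
  {x | ∃ c : ℝ, 0 ≤ c ∧ ∃ p ∈ P, x = c • p}

/-- `\hat P`, the weak-star closure of the cone generated by `P`. -/
def hatP (P : Set (VSp X)) : Set (VSp X) :=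
  closure (coneOf P)

/-- A thermodynamical theory: processes have change of condition with total mass
zero (i.e. `P ⊆ V(X)`), and `\hat P` is convex. -/
def IsThermoTheory (P : Set (VSp X)) : Prop :=
  (∀ p ∈ P, p.1 (1 : C(X, ℝ)) = 0) ∧ Convex ℝ (hatP P)

/-- A Kelvin–Planck theory: a thermodynamical theory with
`\hat P ∩ ({0} × M₊(X)) = {(0,0)}`. -/
def IsKelvinPlanck (P : Set (VSp X)) : Prop :=
  IsThermoTheory P ∧ hatP P ∩ (({0} : Set (Meas X)) ×ˢ PosMeas X) = {(0, 0)}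

/-- A Clausius–Duhem pair `(η, T)` for the theory `P`: `η` and `T` are continuous,
`T` is strictly positive, and for every continuous `β` equal pointwise to `1/T`
(such a `β` exists, and is unique, by positivity of `T`), the Clausius–Duhem
inequality `∫ η d(Δm) ≥ ∫ (1/T) dq` holds for every process in `P`. -/
def IsCDPair (P : Set (VSp X)) (η T : C(X, ℝ)) : Prop :=
  (∀ x, 0 < T x) ∧
    ∀ β : C(X, ℝ), (∀ x, β x = (T x)⁻¹) → ∀ p ∈ P, p.2 β ≤ p.1 η

/-- A Clausius–Duhem temperature scale. -/
def IsCDTemp (P : Set (VSp X)) (T : C(X, ℝ)) : Prop :=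
  ∃ η : C(X, ℝ), IsCDPair P η T

/-- Two states are of the same hotness: both `(0, δ_a − δ_b)` and `(0, δ_b − δ_a)`
belong to `\hat P`. -/
def SameHotness (P : Set (VSp X)) (a b : X) : Prop :=
  ((0 : Meas X), dirac a - dirac b) ∈ hatP P ∧
    ((0 : Meas X), dirac b - dirac a) ∈ hatP P

/-- The hotness level of a state. -/
def hotnessLevel (P : Set (VSp X)) (a : X) : Set X :=
  {b | SameHotness P a b}

/-- A subset of the state space that is a hotness level. -/
def IsHotnessLevel (P : Set (VSp X)) (h : Set X) : Prop :=
  ∃ a : X, h = hotnessLevel P a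

/-- The (signed) measure `μ` is supported in the set `A`: `μ` annihilates every
continuous function vanishing on `A`. -/
def SuppIn (μ : Meas X) (A : Set X) : Prop :=
  ∀ f : C(X, ℝ), (∀ x ∈ A, f x = 0) → μ f = 0

/-- `\hat Q` contains a passive heat transfer from hotness level `h` to `h'`:
an element `(0, μ − μ')` of `\hat Q` with `μ, μ'` nonnegative, `supp μ ⊆ h`,
`supp μ' ⊆ h'` and `μ(h) = μ'(h') > 0` (the common value being the total mass). -/
def IsPassiveHT (Q : Set (VSp X)) (h h' : Set X) : Prop :=
  ∃ μ μ' : Meas X, μ ∈ PosMeas X ∧ μ' ∈ PosMeas X ∧ SuppIn μ h ∧ SuppIn μ' h' ∧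
    μ (1 : C(X, ℝ)) = μ' (1 : C(X, ℝ)) ∧ 0 < μ (1 : C(X, ℝ)) ∧
    ((0 : Meas X), μ - μ') ∈ hatP Q

/-- Hotness level `h'` is hotter than `h`: the levels are distinct and every
thermodynamical theory whose closed process cone contains `P` together with a
passive heat transfer from `h` to `h'` fails to be a Kelvin–Planck theory. -/
def Hotter (P : Set (VSp X)) (h' h : Set X) : Prop :=
  h' ≠ h ∧ ∀ Pd : Set (VSp X), IsThermoTheory Pd → P ⊆ hatP Pd →
    IsPassiveHT Pd h h' → ¬ IsKelvinPlanck Pd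

/-- State `a` is hotter than state `b`. -/
def HotterState (P : Set (VSp X)) (a b : X) : Prop :=
  Hotter P (hotnessLevel P a) (hotnessLevel P b)

/-- A Carnot element of the theory `P` operating between hotness levels `h'` and
`h`: a reversible cyclic element `(0, μ' − μ)` with `μ', μ` nonzero nonnegative
measures supported in `h'`, `h` respectively. -/
def IsCarnotBetween (P : Set (VSp X)) (h' h : Set X) (p : VSp X) : Prop :=
  p ∈ hatP P ∧ -p ∈ hatP P ∧
    ∃ μ' μ : Meas X, μ' ∈ PosMeas X ∧ μ ∈ PosMeas X ∧ μ' ≠ 0 ∧ μ ≠ 0 ∧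
      SuppIn μ' h' ∧ SuppIn μ h ∧ p = ((0 : Meas X), μ' - μ)

end

noncomputable section

/-- The inclusion of the left summand as a continuous map. -/
def inlCM (X Y : Type*) [TopologicalSpace X] [TopologicalSpace Y] : C(X, X ⊕ Y) :=
  ⟨Sum.inl, continuous_inl⟩

/-- The inclusion of the right summand as a continuous map. -/
def inrCM (X Y : Type*) [TopologicalSpace X] [TopologicalSpace Y] : C(Y, X ⊕ Y) :=
  ⟨Sum.inr, continuous_inr⟩

/-- The continuous indicator function of the left summand of a disjoint union. -/
def charL (X Y : Type*) [TopologicalSpace X] [TopologicalSpace Y] : C(X ⊕ Y, ℝ) :=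
  ⟨Sum.elim (fun _ => (1 : ℝ)) (fun _ => (0 : ℝ)), by continuity⟩

/-- The continuous indicator function of the right summand of a disjoint union. -/
def charR (X Y : Type*) [TopologicalSpace X] [TopologicalSpace Y] : C(X ⊕ Y, ℝ) :=
  ⟨Sum.elim (fun _ => (0 : ℝ)) (fun _ => (1 : ℝ)), by continuity⟩

/-- `P` is essentially contained in `Q` along the embedding `ι`: every process of
`P`, extended by zero outside the range of `ι` (i.e. pushed forward along `ι`),
belongs to `Q`. -/
def EssCont {Z W : Type*} [TopologicalSpace Z] [TopologicalSpace W]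
    (ι : C(Z, W)) (P : Set (VSp Z)) (Q : Set (VSp W)) : Prop :=
  ∀ p ∈ P, ∃ q ∈ Q, ∀ f : C(W, ℝ),
    q.1 f = p.1 (f.comp ι) ∧ q.2 f = p.2 (f.comp ι)

/-- `P₃`, on the disjoint union `X ⊕ Y`, is a conjunction of the theories `P₁`
(on `X`) and `P₂` (on `Y`): it is a thermodynamical theory essentially containing
`P₁` and `P₂`, and every change of condition of `P₃` vanishes on each of `X`, `Y`. -/
def IsConjunction {X Y : Type*} [TopologicalSpace X] [TopologicalSpace Y]
    (P₁ : Set (VSp X)) (P₂ : Set (VSp Y)) (P₃ : Set (VSp (X ⊕ Y))) : Prop :=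
  IsThermoTheory P₃ ∧
    EssCont (inlCM X Y) P₁ P₃ ∧ EssCont (inrCM X Y) P₂ P₃ ∧
    ∀ p ∈ P₃, p.1 (charL X Y) = 0 ∧ p.1 (charR X Y) = 0

/-- State `a` is weakly hotter than state `b` in the theory `P`. -/
def WHotterState {X : Type*} [TopologicalSpace X] (P : Set (VSp X)) (a b : X) : Prop :=
  ¬ SameHotness P a b ∧
    ∃ ν ∈ PosMeas X, ((0 : Meas X), dirac a - dirac b + ν) ∈ hatP P

/-- The hotness levels of the theory `P` are totally ordered by the
hotter-than relation. -/
def TotallyOrderedHotness {X : Type*} [TopologicalSpace X] (P : Set (VSp X)) : Prop :=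
  ∀ a b : X, SameHotness P a b ∨ HotterState P a b ∨ HotterState P b a

/-- `PC`, on `Θ ⊕ X`, is a thermometric conjunction of the thermometer theory `PΘ`
(on `Θ`) and the theory `P` (on `X`): a Kelvin–Planck conjunction in which every
state of `X` is of the same hotness as some state of `Θ`. -/
def IsThermometricConjunction {Θ X : Type*} [TopologicalSpace Θ] [TopologicalSpace X]
    (PΘ : Set (VSp Θ)) (P : Set (VSp X)) (PC : Set (VSp (Θ ⊕ X))) : Prop :=
  IsKelvinPlanck PC ∧ IsConjunction PΘ P PC ∧
    ∀ σ : X, ∃ θ : Θ, SameHotness PC (Sum.inr σ) (Sum.inl θ)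

end

/-- The embedding `Θ₁ ⊕ X → (Θ₁ ⊕ Θ₂) ⊕ X`. -/
def emb₁ (Θ₁ Θ₂ X : Type*) [TopologicalSpace Θ₁] [TopologicalSpace Θ₂]
    [TopologicalSpace X] : C(Θ₁ ⊕ X, (Θ₁ ⊕ Θ₂) ⊕ X) :=
  ⟨Sum.map Sum.inl id, by continuity⟩

/-- The embedding `Θ₂ ⊕ X → (Θ₁ ⊕ Θ₂) ⊕ X`. -/
def emb₂ (Θ₁ Θ₂ X : Type*) [TopologicalSpace Θ₁] [TopologicalSpace Θ₂]
    [TopologicalSpace X] : C(Θ₂ ⊕ X, (Θ₁ ⊕ Θ₂) ⊕ X) :=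
  ⟨Sum.map Sum.inr id, by continuity⟩


/-!
A Kelvin–Planck theory on a compact space admits a Clausius–Duhem pair `(η, β)` with `β > 0`
(`β` in the role of `1/T`): Hahn–Banach separates its closed process cone from
`{0} × {probability measures}`, and the separating functional splits as `(η, β)`. Pulling back a
pair of the compatible theory `PC3` gives pairs on both conjunctions, so (ii) follows from the
uniqueness of their temperature scales.

For (i), in a thermometric conjunction with a totally ordered thermometer, `σ' ≻ σ` holds exactly
when `β σ' < β σ`, for any such pair. Hotter states have smaller `β`: when `β σ ≤ β σ'`, adjoining
a passive heat transfer from `σ` to `σ'` preserves the Clausius–Duhem inequality, hence the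
Kelvin–Planck property. Conversely, trichotomy compares the thermometer states matching `σ'` and
`σ`, and a hotter thermometer state stays hotter in the conjunction because in every Kelvin–Planck
extension heat passively flows only towards larger `β`. Hence both conjunctions order `X` by the
same function `β` of `PC3`.
-/

section Meas

variable {X : Type*} [TopologicalSpace X]

@[simp] theorem dirac_apply (x : X) (f : C(X, ℝ)) : dirac x f = f x := rfl

@[simp] theorem Meas.zero_apply (f : C(X, ℝ)) : (0 : Meas X) f = 0 := rfl

@[simp] theorem Meas.add_apply (μ ν : Meas X) (f : C(X, ℝ)) : (μ + ν) f = μ f + ν f := rfl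

@[simp] theorem Meas.sub_apply (μ ν : Meas X) (f : C(X, ℝ)) : (μ - ν) f = μ f - ν f := rfl

@[simp] theorem Meas.smul_apply (c : ℝ) (μ : Meas X) (f : C(X, ℝ)) : (c • μ) f = c * μ f := rfl

theorem SuppIn.apply_eq {μ : Meas X} {A : Set X} (hμ : SuppIn μ A) {f : C(X, ℝ)} {c : ℝ}
    (hf : ∀ x ∈ A, f x = c) : μ f = c * μ 1 := by
  have := hμ (f - c • 1) fun x hx => by simp [hf x hx]
  simp only [map_sub, map_smul, smul_eq_mul] at this
  linarith

end Meas

section PosMeas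

variable {X : Type*} [TopologicalSpace X] [CompactSpace X] {μ : Meas X}

theorem abs_apply_le_of_mem_posMeas (hμ : μ ∈ PosMeas X) (g : C(X, ℝ)) :
    |μ g| ≤ μ 1 * ‖g‖ := by
  have key : ∀ g : C(X, ℝ), μ g ≤ μ 1 * ‖g‖ := fun g => by
    have h := hμ (‖g‖ • 1 - g) fun x => by
      have := (abs_le.1 (g.norm_coe_le_norm x)).2
      simp only [ContinuousMap.sub_apply, ContinuousMap.smul_apply, ContinuousMap.one_apply,
        smul_eq_mul, mul_one]
      linarith
    simp only [map_sub, map_smul, smul_eq_mul] at h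
    linarith
  refine abs_le.2 ⟨?_, key g⟩
  have := key (-g)
  rw [map_neg, norm_neg] at this
  linarith

theorem eq_zero_of_mem_posMeas_of_apply_one_eq_zero (hμ : μ ∈ PosMeas X) (h1 : μ 1 = 0) :
    μ = 0 :=
  DFunLike.ext _ _ fun g => abs_nonpos_iff.1 (by simpa [h1] using abs_apply_le_of_mem_posMeas hμ g)

theorem eq_zero_of_mem_posMeas_of_apply_nonpos (hμ : μ ∈ PosMeas X) {f : C(X, ℝ)}
    (hf : ∀ x, 0 < f x) (h : μ f ≤ 0) : μ = 0 := by
  obtain ⟨c, hc, hcf⟩ := isCompact_univ.exists_forall_le' f.continuous.continuousOn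
    fun x _ => hf x
  have hlow : c * μ 1 ≤ μ f := by
    simpa using hμ (f - c • 1) fun x => by simpa using hcf x (mem_univ x)
  have h1 : 0 ≤ μ 1 := hμ 1 fun _ => zero_le_one
  exact eq_zero_of_mem_posMeas_of_apply_one_eq_zero hμ (by nlinarith)

end PosMeas

section Cone

variable {X : Type*} [TopologicalSpace X]

theorem smul_mem_coneOf {P : Set (VSp X)} {c : ℝ} (hc : 0 ≤ c) {x : VSp X}
    (hx : x ∈ coneOf P) : c • x ∈ coneOf P := by
  obtain ⟨c', hc', p, hp, rfl⟩ := hx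
  exact ⟨c * c', mul_nonneg hc hc', p, hp, smul_smul c c' p⟩

theorem smul_mem_hatP {P : Set (VSp X)} {c : ℝ} (hc : 0 ≤ c) {x : VSp X}
    (hx : x ∈ hatP P) : c • x ∈ hatP P :=
  map_mem_closure (continuous_const_smul c) hx fun _ hy => smul_mem_coneOf hc hy

theorem subset_hatP (P : Set (VSp X)) : P ⊆ hatP P := fun p hp =>
  subset_closure ⟨1, zero_le_one, p, hp, (one_smul ℝ p).symm⟩

theorem hatP_subset {P C : Set (VSp X)} (hC : IsClosed C)
    (hcone : ∀ c : ℝ, 0 ≤ c → ∀ x ∈ C, c • x ∈ C) (hPC : P ⊆ C) : hatP P ⊆ C :=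
  closure_minimal (by rintro _ ⟨c, hc, p, hp, rfl⟩; exact hcone c hc p (hPC hp)) hC

theorem coneOf_eq_self {P : Set (VSp X)} (hP : ∀ c : ℝ, 0 ≤ c → ∀ x ∈ P, c • x ∈ P) :
    coneOf P = P :=
  Subset.antisymm (by rintro _ ⟨c, hc, p, hp, rfl⟩; exact hP c hc p hp)
    fun p hp => ⟨1, zero_le_one, p, hp, (one_smul ℝ p).symm⟩

theorem zero_mem_hatP {P : Set (VSp X)} (hP : P.Nonempty) : (0 : VSp X) ∈ hatP P := by
  obtain ⟨p, hp⟩ := hP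
  simpa using smul_mem_hatP le_rfl (subset_hatP P hp)

theorem fst_apply_one_of_mem_hatP {P : Set (VSp X)} (hP : ∀ p ∈ P, p.1 (1 : C(X, ℝ)) = 0)
    {q : VSp X} (hq : q ∈ hatP P) : q.1 (1 : C(X, ℝ)) = 0 := by
  refine hatP_subset (C := {q | q.1 (1 : C(X, ℝ)) = 0}) ?_ ?_ hP hq
  · exact isClosed_eq ((WeakDual.eval_continuous _).comp continuous_fst) continuous_const
  · intro c _ x hx
    simp_all

theorem mem_hotnessLevel_self {P : Set (VSp X)} (h0 : (0 : VSp X) ∈ hatP P) (a : X) :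
    a ∈ hotnessLevel P a := by
  have h : ((0 : Meas X), dirac a - dirac a) = 0 := by rw [sub_self]; rfl
  exact ⟨h ▸ h0, h ▸ h0⟩

theorem nonempty_of_hotnessLevel_ne {P : Set (VSp X)} {a b : X}
    (h : hotnessLevel P a ≠ hotnessLevel P b) : P.Nonempty := by
  rw [nonempty_iff_ne_empty]
  rintro rfl
  exact h (by simp [hotnessLevel, SameHotness, hatP, coneOf])

end Cone

section ClausiusDuhem

variable {X : Type*} [TopologicalSpace X] {P : Set (VSp X)} {η β : C(X, ℝ)}

/-- `β` stands for the reciprocal temperature `1 / T`. -/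
def CDIneq (P : Set (VSp X)) (η β : C(X, ℝ)) : Prop :=
  ∀ p ∈ P, p.2 β ≤ p.1 η

theorem CDIneq.toHatP (h : CDIneq P η β) : CDIneq (hatP P) η β := by
  refine hatP_subset (C := {q | q.2 β ≤ q.1 η}) ?_ ?_ h
  · exact isClosed_le ((WeakDual.eval_continuous β).comp continuous_snd)
      ((WeakDual.eval_continuous η).comp continuous_fst)
  · intro c hc x hx
    simpa using mul_le_mul_of_nonneg_left hx hc

theorem CDIneq.mono {Q : Set (VSp X)} (h : CDIneq P η β) (hQP : Q ⊆ P) : CDIneq Q η β :=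
  fun q hq => h q (hQP hq)

theorem CDIneq.comp {Y : Type*} [TopologicalSpace Y] {ι : C(Y, X)} {Q : Set (VSp Y)}
    (h : CDIneq P η β) (hι : EssCont ι Q P) : CDIneq Q (η.comp ι) (β.comp ι) := by
  intro q hq
  obtain ⟨p, hp, hpq⟩ := hι q hq
  rw [← (hpq β).2, ← (hpq η).1]
  exact h p hp

theorem CDIneq.eq_of_sameHotness (h : CDIneq P η β) {a b : X} (hab : SameHotness P a b) :
    β a = β b := by
  have h₁ := h.toHatP _ hab.1
  have h₂ := h.toHatP _ hab.2
  simp only [Meas.sub_apply, dirac_apply, Meas.zero_apply] at h₁ h₂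
  linarith

theorem CDIneq.le_of_isPassiveHT (h : CDIneq P η β) {A B : Set X} (hAB : IsPassiveHT P A B)
    {a b : ℝ} (hA : ∀ x ∈ A, β x = a) (hB : ∀ x ∈ B, β x = b) : a ≤ b := by
  obtain ⟨μ, μ', -, -, hμ, hμ', hmass, hpos, hmem⟩ := hAB
  have := h.toHatP _ hmem
  simp only [Meas.sub_apply, Meas.zero_apply, hμ.apply_eq hA, hμ'.apply_eq hB, ← hmass] at this
  nlinarith

theorem isKelvinPlanck_of_cdIneq [CompactSpace X] (hP : IsThermoTheory P) (hne : P.Nonempty)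
    (hβ : ∀ x, 0 < β x) (h : CDIneq P η β) : IsKelvinPlanck P := by
  refine ⟨hP, Subset.antisymm ?_ ?_⟩
  · rintro ⟨_, ρ⟩ ⟨hq, rfl, hρ⟩
    have := h.toHatP _ hq
    simp only [Meas.zero_apply] at this
    rw [eq_zero_of_mem_posMeas_of_apply_nonpos (μ := ρ) hρ hβ this]
    rfl
  · rintro _ rfl
    exact ⟨zero_mem_hatP hne, rfl, fun _ _ => le_rfl⟩

theorem isCDTemp_of_cdIneq (h : CDIneq P η β) (hβ : ∀ x, 0 < β x) :
    IsCDTemp P ⟨fun x => (β x)⁻¹, β.continuous.inv₀ fun x => (hβ x).ne'⟩ := by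
  refine ⟨η, fun x => inv_pos.2 (hβ x), fun β' hβ' => ?_⟩
  obtain rfl : β' = β := ContinuousMap.ext fun x => by simpa using hβ' x
  exact h

end ClausiusDuhem

section Separation

instance {E : Type*} [AddCommGroup E] [Module ℝ E] [TopologicalSpace E] :
    LocallyConvexSpace ℝ (WeakDual ℝ E) :=
  WeakBilin.locallyConvexSpace

theorem WeakDual.exists_forall_eq_apply {𝕜 E : Type*} [NontriviallyNormedField 𝕜]
    [AddCommGroup E] [Module 𝕜 E] [TopologicalSpace E] (φ : WeakDual 𝕜 E →L[𝕜] 𝕜) :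
    ∃ e : E, ∀ μ : WeakDual 𝕜 E, φ μ = μ e := by
  obtain ⟨e, rfl⟩ := LinearMap.dualEmbedding_surjective (topDualPairing 𝕜 E) φ
  exact ⟨e, fun _ => rfl⟩

variable {X : Type*} [TopologicalSpace X]

def ProbMeas (X : Type*) [TopologicalSpace X] : Set (Meas X) :=
  {μ | μ ∈ PosMeas X ∧ μ 1 = 1}

theorem convex_probMeas : Convex ℝ (ProbMeas X) := by
  rintro μ ⟨hμ, hμ1⟩ ν ⟨hν, hν1⟩ a b ha hb hab
  refine ⟨fun f hf => ?_, by simp [hμ1, hν1, hab]⟩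
  simpa using add_nonneg (mul_nonneg ha (hμ f hf)) (mul_nonneg hb (hν f hf))

theorem isCompact_probMeas [CompactSpace X] : IsCompact (ProbMeas X) := by
  have hclosed : IsClosed (ProbMeas X) := by
    refine IsClosed.inter ?_ (isClosed_eq (WeakDual.eval_continuous 1) continuous_const)
    simp only [PosMeas, ofPred_forall]
    exact isClosed_iInter fun f => isClosed_iInter fun _ =>
      isClosed_le continuous_const (WeakDual.eval_continuous f)
  refine (WeakDual.isCompact_closedBall (0 : StrongDual ℝ C(X, ℝ)) 1).of_isClosed_subset
    hclosed fun μ ⟨hμ, hμ1⟩ => ?_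
  rw [mem_preimage, mem_closedBall_zero_iff]
  refine ContinuousLinearMap.opNorm_le_bound _ zero_le_one fun f => ?_
  simpa [hμ1] using abs_apply_le_of_mem_posMeas hμ f

theorem exists_cdIneq_of_isKelvinPlanck [CompactSpace X] {P : Set (VSp X)}
    (hP : IsKelvinPlanck P) : ∃ η β : C(X, ℝ), (∀ x, 0 < β x) ∧ CDIneq P η β := by
  have h0 : (0 : VSp X) ∈ hatP P := (hP.2.symm.subset rfl).1
  have hdisj : Disjoint (hatP P) ({0} ×ˢ ProbMeas X) := by
    refine disjoint_left.2 fun q hq ⟨hq₁, hq₂, hq₂1⟩ => ?_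
    have : q = 0 := hP.2.subset ⟨hq, hq₁, hq₂⟩
    simp [this] at hq₂1
  obtain ⟨Φ, u, v, hΦP, huv, hΦB⟩ := geometric_hahn_banach_closed_compact hP.1.2
    isClosed_closure ((convex_singleton 0).prod convex_probMeas)
    (isCompact_singleton.prod isCompact_probMeas) hdisj
  have hu : 0 < u := by simpa using hΦP 0 h0
  have hΦ : ∀ q ∈ hatP P, Φ q ≤ 0 := by
    intro q hq
    by_contra! hpos
    have := hΦP ((u / Φ q) • q) (smul_mem_hatP (by positivity) hq)
    rw [map_smul, smul_eq_mul, div_mul_cancel₀ _ hpos.ne'] at this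
    exact this.false
  obtain ⟨η, hη⟩ := WeakDual.exists_forall_eq_apply (Φ.comp (.inl ℝ (Meas X) (Meas X)))
  obtain ⟨β, hβ⟩ := WeakDual.exists_forall_eq_apply (Φ.comp (.inr ℝ (Meas X) (Meas X)))
  have hsplit : ∀ q : VSp X, Φ q = q.1 η + q.2 β := fun q => by
    rw [← hη, ← hβ, Φ.comp_inl_add_comp_inr]
  refine ⟨-η, β, fun x => ?_, fun q hq => ?_⟩
  · have := hΦB (0, dirac x) ⟨rfl, fun f hf => hf x, rfl⟩
    rw [hsplit] at this
    simp only [Meas.zero_apply, dirac_apply, zero_add] at this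
    linarith
  · have := hΦ q (subset_hatP P hq)
    rw [hsplit] at this
    rw [map_neg]
    linarith

end Separation

section Hotter

variable {X : Type*} [TopologicalSpace X] {Q : Set (VSp X)} {η β : C(X, ℝ)}

def addRay (K : Set (VSp X)) (w : VSp X) : Set (VSp X) :=
  {y | ∃ q ∈ K, ∃ t : ℝ, 0 ≤ t ∧ y = q + t • w}

theorem isThermoTheory_addRay (hQ : IsThermoTheory Q) {w : VSp X} (hw : w.1 1 = 0) :
    IsThermoTheory (addRay (hatP Q) w) := by
  have hcone : ∀ c : ℝ, 0 ≤ c → ∀ x ∈ addRay (hatP Q) w, c • x ∈ addRay (hatP Q) w := by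
    rintro c hc _ ⟨q, hq, t, ht, rfl⟩
    exact ⟨c • q, smul_mem_hatP hc hq, c * t, mul_nonneg hc ht, by rw [smul_add, smul_smul]⟩
  have hconv : Convex ℝ (addRay (hatP Q) w) := by
    rintro _ ⟨q₁, hq₁, t₁, ht₁, rfl⟩ _ ⟨q₂, hq₂, t₂, ht₂, rfl⟩ a b ha hb hab
    exact ⟨a • q₁ + b • q₂, hQ.2 hq₁ hq₂ ha hb hab, a * t₁ + b * t₂, by positivity, by module⟩
  refine ⟨?_, ?_⟩
  · rintro _ ⟨q, hq, t, -, rfl⟩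
    simp [fst_apply_one_of_mem_hatP hQ.1 hq, hw]
  · rw [hatP, coneOf_eq_self hcone]
    exact hconv.closure

theorem CDIneq.toAddRay (h : CDIneq Q η β) {w : VSp X} (hw : w.2 β ≤ w.1 η) :
    CDIneq (addRay (hatP Q) w) η β := by
  rintro _ ⟨q, hq, t, ht, rfl⟩
  have := h.toHatP q hq
  simp only [Prod.fst_add, Prod.snd_add, Prod.smul_fst, Prod.smul_snd, Meas.add_apply,
    Meas.smul_apply]
  nlinarith [mul_le_mul_of_nonneg_left hw ht]

theorem CDIneq.lt_of_hotterState [CompactSpace X] (hQ : IsThermoTheory Q) (hβ : ∀ x, 0 < β x)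
    (h : CDIneq Q η β) {c d : X} (hcd : HotterState Q c d) : β c < β d := by
  by_contra! hle
  have h0 := zero_mem_hatP (nonempty_of_hotnessLevel_ne hcd.1)
  set w : VSp X := ((0 : Meas X), dirac d - dirac c)
  have hw : w ∈ addRay (hatP Q) w := ⟨0, h0, 1, zero_le_one, by simp⟩
  have hS := isThermoTheory_addRay hQ (w := w) rfl
  -- `w` is a passive heat transfer from `d` to `c`, yet `(η, β)` stays a Clausius–Duhem pair.
  refine hcd.2 _ hS (fun q hq => subset_hatP _ ⟨q, subset_hatP Q hq, 0, le_rfl, by simp⟩) ?_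
    (isKelvinPlanck_of_cdIneq hS ⟨w, hw⟩ hβ (h.toAddRay ?_))
  · exact ⟨dirac d, dirac c, fun f hf => hf d, fun f hf => hf c,
      fun f hf => hf d (mem_hotnessLevel_self h0 d), fun f hf => hf c (mem_hotnessLevel_self h0 c),
      rfl, by simp, subset_hatP _ hw⟩
  · simpa [w] using hle

theorem hotterState_of_hotterState_of_sameHotness {Θ Y : Type*} [TopologicalSpace Θ]
    [CompactSpace Θ] [TopologicalSpace Y] [CompactSpace Y] {PΘ : Set (VSp Θ)} {Q : Set (VSp Y)}
    {ι : C(Θ, Y)} (hPΘ : IsThermoTheory PΘ) (hι : EssCont ι PΘ Q) {θ θ' : Θ}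
    (hθ : HotterState PΘ θ θ') {c d : Y} (hc : SameHotness Q c (ι θ))
    (hd : SameHotness Q d (ι θ')) (hlev : hotnessLevel Q c ≠ hotnessLevel Q d) :
    HotterState Q c d := by
  refine ⟨hlev, fun Pd _ hQPd hpass hKP => ?_⟩
  obtain ⟨η, β, hβ, hPd⟩ := exists_cdIneq_of_isKelvinPlanck hKP
  have hQ : CDIneq Q η β := hPd.toHatP.mono hQPd
  have hlt : β (ι θ) < β (ι θ') := (hQ.comp hι).lt_of_hotterState hPΘ (fun x => hβ (ι x)) hθ
  have hle : β d ≤ β c := hPd.le_of_isPassiveHT hpass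
    (fun x hx => (hQ.eq_of_sameHotness hx).symm) (fun x hx => (hQ.eq_of_sameHotness hx).symm)
  rw [hQ.eq_of_sameHotness hc, hQ.eq_of_sameHotness hd] at hle
  exact hle.not_gt hlt

theorem IsThermometricConjunction.hotterState_iff_lt {Θ : Type*} [TopologicalSpace Θ]
    [CompactSpace Θ] [CompactSpace X] {PΘ : Set (VSp Θ)} {P : Set (VSp X)}
    {PC : Set (VSp (Θ ⊕ X))} (hC : IsThermometricConjunction PΘ P PC)
    (hPΘ : IsThermoTheory PΘ) (hord : TotallyOrderedHotness PΘ) {η β : C(Θ ⊕ X, ℝ)}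
    (hβ : ∀ x, 0 < β x) (h : CDIneq PC η β) (a b : X) :
    HotterState PC (.inr a) (.inr b) ↔ β (.inr a) < β (.inr b) := by
  refine ⟨h.lt_of_hotterState hC.1.1 hβ, fun hlt => ?_⟩
  obtain ⟨θ, hθ⟩ := hC.2.2 a
  obtain ⟨θ', hθ'⟩ := hC.2.2 b
  have hΘ : CDIneq PΘ (η.comp (inlCM Θ X)) (β.comp (inlCM Θ X)) := h.comp hC.2.1.2.1
  rw [h.eq_of_sameHotness hθ, h.eq_of_sameHotness hθ'] at hlt
  rcases hord θ θ' with hsame | hhot | hhot'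
  · exact absurd (hΘ.eq_of_sameHotness hsame) hlt.ne
  · refine hotterState_of_hotterState_of_sameHotness hPΘ hC.2.1.2.1 hhot hθ hθ' fun heq => ?_
    have hθ'a : SameHotness PC (.inr a) (.inl θ') := by
      change Sum.inl θ' ∈ hotnessLevel PC (.inr a)
      rw [heq]
      exact hθ'
    exact hlt.ne ((h.eq_of_sameHotness hθ).symm.trans (h.eq_of_sameHotness hθ'a))
  · exact absurd (hΘ.lt_of_hotterState hPΘ (fun x => hβ _) hhot') hlt.not_gt

end Hotter

theorem thermometer_consistency_general
    {Θ₁ Θ₂ X : Type*}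
    [TopologicalSpace Θ₁] [CompactSpace Θ₁]
    [TopologicalSpace Θ₂] [CompactSpace Θ₂]
    [TopologicalSpace X] [CompactSpace X]
    (P : Set (VSp X))
    (PΘ1 : Set (VSp Θ₁)) (hPΘ1 : IsKelvinPlanck PΘ1)
    (hord1 : TotallyOrderedHotness PΘ1)
    (PΘ2 : Set (VSp Θ₂)) (hPΘ2 : IsKelvinPlanck PΘ2)
    (hord2 : TotallyOrderedHotness PΘ2)
    (PC1 : Set (VSp (Θ₁ ⊕ X))) (hTC1 : IsThermometricConjunction PΘ1 P PC1)
    (PC2 : Set (VSp (Θ₂ ⊕ X))) (hTC2 : IsThermometricConjunction PΘ2 P PC2)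
    (hcompat : ∃ PC3 : Set (VSp ((Θ₁ ⊕ Θ₂) ⊕ X)), IsKelvinPlanck PC3 ∧
      EssCont (emb₁ Θ₁ Θ₂ X) PC1 PC3 ∧ EssCont (emb₂ Θ₁ Θ₂ X) PC2 PC3) :
    (∀ a b : X, HotterState PC1 (Sum.inr a) (Sum.inr b) ↔
      HotterState PC2 (Sum.inr a) (Sum.inr b)) ∧
    (∀ (T₁ : C(Θ₁ ⊕ X, ℝ)) (T₂ : C(Θ₂ ⊕ X, ℝ)),
      IsCDTemp PC1 T₁ → (∀ T : C(Θ₁ ⊕ X, ℝ), IsCDTemp PC1 T →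
        ∃ α : ℝ, 0 < α ∧ T = α • T₁) →
      IsCDTemp PC2 T₂ → (∀ T : C(Θ₂ ⊕ X, ℝ), IsCDTemp PC2 T →
        ∃ α : ℝ, 0 < α ∧ T = α • T₂) →
      ∃ α : ℝ, 0 < α ∧ ∀ σ : X, T₂ (Sum.inr σ) = α * T₁ (Sum.inr σ)) := by
  obtain ⟨PC3, hKP3, hE1, hE2⟩ := hcompat
  obtain ⟨η, β, hβ, hPC3⟩ := exists_cdIneq_of_isKelvinPlanck hKP3
  have hPC1 := hPC3.comp hE1
  have hPC2 := hPC3.comp hE2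
  refine ⟨fun a b => ?_, fun T₁ T₂ _ hT₁ _ hT₂ => ?_⟩
  · rw [hTC1.hotterState_iff_lt hPΘ1.1 hord1 (fun _ => hβ _) hPC1,
      hTC2.hotterState_iff_lt hPΘ2.1 hord2 (fun _ => hβ _) hPC2]
    rfl
  · obtain ⟨α₁, hα₁, h₁⟩ := hT₁ _ (isCDTemp_of_cdIneq hPC1 fun _ => hβ _)
    obtain ⟨α₂, hα₂, h₂⟩ := hT₂ _ (isCDTemp_of_cdIneq hPC2 fun _ => hβ _)
    refine ⟨α₁ / α₂, div_pos hα₁ hα₂, fun σ => ?_⟩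
    -- `emb₁` and `emb₂` agree on `X`, so both sides of `key` are `(β (.inr σ))⁻¹`.
    have key : α₁ * T₁ (.inr σ) = α₂ * T₂ (.inr σ) :=
      (ContinuousMap.congr_fun h₁ (.inr σ)).symm.trans (ContinuousMap.congr_fun h₂ (.inr σ))
    field_simp
    linarith

/-- **Theorem (Consistency of Thermometers).** Let `(X, P)` be a Kelvin–Planck
theory with thermometric conjunctions `PC1` (on `Θ₁ ⊕ X`) and `PC2` (on `Θ₂ ⊕ X`)
corresponding to two thermometers `(Θ₁, PΘ1)` and `(Θ₂, PΘ2)`.  If the two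
conjunctions are Kelvin–Planck compatible — some Kelvin–Planck theory on
`(Θ₁ ⊕ Θ₂) ⊕ X` essentially contains both — then:
(i) the hotter-than relations induced on `X` by the two conjunctions coincide;
(ii) if for `j = 1, 2` every Clausius–Duhem temperature scale of `PCj` is a positive
multiple of a fixed `T*_j`, then the restrictions of `T*_1` and `T*_2` to `X`
differ by a positive multiple. -/
theorem thermometer_consistency
    {Θ₁ Θ₂ X : Type*}
    [TopologicalSpace Θ₁] [CompactSpace Θ₁] [T2Space Θ₁]
    [TopologicalSpace Θ₂] [CompactSpace Θ₂] [T2Space Θ₂]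
    [TopologicalSpace X] [CompactSpace X] [T2Space X]
    (P : Set (VSp X)) (hP : IsKelvinPlanck P)
    (PΘ1 : Set (VSp Θ₁)) (hPΘ1 : IsKelvinPlanck PΘ1)
    (hord1 : TotallyOrderedHotness PΘ1)
    (PΘ2 : Set (VSp Θ₂)) (hPΘ2 : IsKelvinPlanck PΘ2)
    (hord2 : TotallyOrderedHotness PΘ2)
    (PC1 : Set (VSp (Θ₁ ⊕ X))) (hTC1 : IsThermometricConjunction PΘ1 P PC1)
    (PC2 : Set (VSp (Θ₂ ⊕ X))) (hTC2 : IsThermometricConjunction PΘ2 P PC2)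
    (hcompat : ∃ PC3 : Set (VSp ((Θ₁ ⊕ Θ₂) ⊕ X)), IsKelvinPlanck PC3 ∧
      EssCont (emb₁ Θ₁ Θ₂ X) PC1 PC3 ∧ EssCont (emb₂ Θ₁ Θ₂ X) PC2 PC3) :
    (∀ a b : X, HotterState PC1 (Sum.inr a) (Sum.inr b) ↔
      HotterState PC2 (Sum.inr a) (Sum.inr b)) ∧
    (∀ (T₁ : C(Θ₁ ⊕ X, ℝ)) (T₂ : C(Θ₂ ⊕ X, ℝ)),
      IsCDTemp PC1 T₁ → (∀ T : C(Θ₁ ⊕ X, ℝ), IsCDTemp PC1 T →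
        ∃ α : ℝ, 0 < α ∧ T = α • T₁) →
      IsCDTemp PC2 T₂ → (∀ T : C(Θ₂ ⊕ X, ℝ), IsCDTemp PC2 T →
        ∃ α : ℝ, 0 < α ∧ T = α • T₂) →
      ∃ α : ℝ, 0 < α ∧ ∀ σ : X, T₂ (Sum.inr σ) = α * T₁ (Sum.inr σ)) :=
  thermometer_consistency_general P PΘ1 hPΘ1 hord1 PΘ2 hPΘ2 hord2 PC1 hTC1 PC2 hTC2 hcompat
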